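/- arXiv:1401.2419 — 5 statements merged into one kernel-verified Lean document; each statement's English description precedes it below -/
import Mathlib

section
/- Let d ≥ 2 be an integer, t > 0, and 0 < t₀ < t_{0,crit}. Let r be the unique number in (0, r_crit) with t₀ = r² − d·t²·r^{2d}, set a = t·r^d, ψ(w) = r·w + a·w^{−d}, and ψ′(w) = r − d·a·w^{−(d+1)}. Then for every integer k ≥ 0: (1/(2π)) ∫_0^{2π} ψ(e^{−iθ}) · ψ(e^{iθ})^{−k} · ψ′(e^{iθ}) · e^{iθ} dθ equals t₀ if k = 0, equals t if k = d + 1, and equals 0 for every other k. (This is the parametrized form of the harmonic-moment identities (1/(2πi)) ∮_{∂Ω} z̄·z^{−k} dz for the Laplacian-growth domain Ω whose boundary is the curve ψ({|w| = 1}); the conjugate z̄ equals ψ(e^{−iθ}) because ψ has real coefficients.) -/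
/-!
Write `a = t·r^d` and `w = e^{iθ}`, so that `e^{-iθ} = w⁻¹` and the integral is the circle average
of `F_k(w) = ψ(w⁻¹)·ψ(w)^{-k}·ψ'(w)·w`.

* Since `ψ(ζw) = ζ·ψ(w)` and `ψ'(ζw) = ψ'(w)` for every `(d+1)`-st root of unity `ζ`, we get
  `F_k(ζw) = ζ^{-k}·F_k(w)`; rotation invariance of the circle average then kills it whenever
  `d + 1 ∤ k`, in particular for `0 < k ≤ d`.
* `F_0(w) = (r² - d·a²) + a·r·w^{d+1} - d·a·r·w^{-(d+1)}`, whose average is its constant term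
  `r² - d·a² = t₀`.
* For `k = d + 1 + m`, the substitution `w = v⁻¹` turns `F_k` into
  `v^m·(r·v^{d+1} + a)·(r - d·a·v^{d+1}) / (r + a·v^{d+1})^k`, holomorphic on the closed unit disc
  because `a < r`; by the mean value property its average is its value at `0`, i.e. `t` if `m = 0`
  and `0` otherwise.
-/

open Complex MeasureTheory

/-- The map `ψ(w) = r·w + t·r^d·w^{-d}`. -/
noncomputable def psi (d : ℕ) (r t : ℝ) (w : ℂ) : ℂ :=
  (r : ℂ) * w + (t : ℂ) * (r : ℂ) ^ d / w ^ d

/-- The derivative `ψ'(w) = r - d·t·r^d·w^{-(d+1)}`. -/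
noncomputable def psi' (d : ℕ) (r t : ℝ) (w : ℂ) : ℂ :=
  (r : ℂ) - (d : ℂ) * (t : ℂ) * (r : ℂ) ^ d / w ^ (d + 1)

open Metric Real

section CircleAverage

variable {E : Type*} [NormedAddCommGroup E] [NormedSpace ℂ E]

theorem circleAverage_comp_exp_mul (f : ℂ → E) (R s : ℝ) :
    circleAverage (fun z ↦ f (exp (s * I) * z)) 0 R = circleAverage f 0 R := by
  rw [circleAverage_eq_integral_add s (f := f)]
  unfold circleAverage
  congr with θ
  simp only [circleMap_zero, ofReal_add, add_mul, Complex.exp_add]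
  ring_nf

theorem circleAverage_eq_zero_of_comp_exp_mul_eq_smul {f : ℂ → E} {R s : ℝ} {c : ℂ}
    (hf : ∀ z ∈ sphere (0 : ℂ) |R|, f (exp (s * I) * z) = c • f z) (hc : c ≠ 1) :
    circleAverage f 0 R = 0 := by
  have h : circleAverage f 0 R = c • circleAverage f 0 R := by
    conv_lhs => rw [← circleAverage_comp_exp_mul f R s, circleAverage_congr_sphere hf]
    exact circleAverage_fun_smul
  have h' : (c - 1) • circleAverage f 0 R = 0 := by rw [sub_smul, one_smul, ← h, sub_self]
  exact (smul_eq_zero.1 h').resolve_left (sub_ne_zero.2 hc)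

theorem circleAverage_zpow_eq_zero {n : ℤ} (hn : n ≠ 0) (R : ℝ) :
    circleAverage (· ^ n) 0 R = 0 := by
  refine circleAverage_eq_zero_of_comp_exp_mul_eq_smul (s := π / n) (c := -1)
    (fun z _ ↦ ?_) (by norm_num)
  rw [mul_zpow, ← exp_int_mul, smul_eq_mul]
  push_cast
  rw [show (n : ℂ) * (π / n * I) = π * I by field_simp, exp_pi_mul_I]

end CircleAverage

theorem add_mul_pow_ne_zero {𝕜 : Type*} [NormedDivisionRing 𝕜] {x y z : 𝕜} (n : ℕ)
    (hz : ‖z‖ ≤ 1) (hxy : ‖y‖ < ‖x‖) : x + y * z ^ n ≠ 0 := by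
  intro h
  have : ‖y * z ^ n‖ ≤ ‖y‖ := by
    rw [norm_mul, norm_pow]
    exact mul_le_of_le_one_right (norm_nonneg y) (pow_le_one₀ (norm_nonneg z) hz)
  rw [eq_neg_of_add_eq_zero_left h, norm_neg] at hxy
  linarith

theorem mul_pow_lt_of_lt_rpow {d : ℕ} {r t : ℝ} (hd : 2 ≤ d) (ht : 0 < t) (hr : 0 < r)
    (hrcrit : r < ((d : ℝ) * t) ^ (-1 / ((d : ℝ) - 1))) : t * r ^ d < r := by
  have hsub : ((d - 1 : ℕ) : ℝ) = (d : ℝ) - 1 := by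
    push_cast [Nat.cast_sub (by omega : 1 ≤ d)]; ring
  have hpow : r ^ (d - 1) < ((d : ℝ) * t)⁻¹ := by
    have hexp : (0 : ℝ) < (d : ℝ) - 1 := by rw [← hsub]; exact_mod_cast (by omega : 0 < d - 1)
    rwa [neg_div, one_div, Real.rpow_neg (by positivity), ← Real.inv_rpow (by positivity),
      Real.lt_rpow_inv_iff_of_pos hr.le (by positivity) hexp, ← hsub, Real.rpow_natCast] at hrcrit
  have hdt : (d : ℝ) * t * r ^ (d - 1) < 1 :=
    (lt_inv_mul_iff₀ (by positivity)).1 (by rwa [mul_one])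
  calc t * r ^ d = t * r ^ (d - 1) * r := by
        rw [mul_assoc, ← pow_succ, Nat.sub_add_cancel (by omega)]
    _ ≤ (d : ℝ) * t * r ^ (d - 1) * r := by gcongr; nlinarith [pow_pos hr (d - 1)]
    _ < r := by nlinarith

noncomputable def momentDensity (d : ℕ) (r t : ℝ) (k : ℕ) (w : ℂ) : ℂ :=
  psi d r t w⁻¹ * psi d r t w ^ (-(k : ℤ)) * psi' d r t w * w

section Psi

variable {d : ℕ} {r t : ℝ}

theorem psi_mul_of_pow_eq_one {ζ : ℂ} (hζ : ζ ^ (d + 1) = 1) (w : ℂ) :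
    psi d r t (ζ * w) = ζ * psi d r t w := by
  have hζ0 : ζ ≠ 0 := by rintro rfl; simp at hζ
  have hζd : ζ ^ d = ζ⁻¹ := eq_inv_of_mul_eq_one_left (by rwa [← pow_succ])
  rw [psi, psi, mul_pow, hζd]
  field_simp

theorem psi'_mul_of_pow_eq_one {ζ : ℂ} (hζ : ζ ^ (d + 1) = 1) (w : ℂ) :
    psi' d r t (ζ * w) = psi' d r t w := by
  rw [psi', psi', mul_pow, hζ, one_mul]

theorem momentDensity_mul_of_pow_eq_one {ζ : ℂ} (hζ : ζ ^ (d + 1) = 1) (k : ℕ) (w : ℂ) :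
    momentDensity d r t k (ζ * w) = (ζ ^ k)⁻¹ * momentDensity d r t k w := by
  have hζ0 : ζ ≠ 0 := by rintro rfl; simp at hζ
  have hζinv : ζ⁻¹ ^ (d + 1) = 1 := by rw [inv_pow, hζ, inv_one]
  rw [momentDensity, momentDensity, mul_inv, psi_mul_of_pow_eq_one hζinv,
    psi_mul_of_pow_eq_one hζ, psi'_mul_of_pow_eq_one hζ, mul_zpow, zpow_neg, zpow_neg,
    zpow_natCast]
  field_simp

theorem circleAverage_momentDensity_of_not_dvd {k : ℕ} (hk : ¬(d + 1) ∣ k) :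
    circleAverage (momentDensity d r t k) 0 1 = 0 := by
  have hζ := isPrimitiveRoot_exp (d + 1) d.succ_ne_zero
  refine circleAverage_eq_zero_of_comp_exp_mul_eq_smul (s := 2 * π / (d + 1))
    (c := (exp (2 * π * I / (d + 1 : ℕ)) ^ k)⁻¹) (fun w _ ↦ ?_) ?_
  · rw [smul_eq_mul, ← momentDensity_mul_of_pow_eq_one hζ.pow_eq_one]
    push_cast
    ring_nf
  · rw [Ne, inv_eq_one, hζ.pow_eq_one_iff_dvd]
    exact hk

theorem momentDensity_zero_eq {w : ℂ} (hw : w ≠ 0) :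
    momentDensity d r t 0 w = ((r : ℂ) ^ 2 - d * ((t : ℂ) * r ^ d) ^ 2)
      + ((t : ℂ) * r ^ d * r) • w ^ ((d + 1 : ℕ) : ℤ)
      - (d * ((t : ℂ) * r ^ d) * r) • w ^ (-((d + 1 : ℕ) : ℤ)) := by
  simp only [momentDensity, psi, psi', Nat.cast_zero, neg_zero, zpow_zero, zpow_neg,
    zpow_natCast, inv_pow, smul_eq_mul]
  field_simp
  ring

theorem circleAverage_momentDensity_zero :
    circleAverage (momentDensity d r t 0) 0 1 = (r : ℂ) ^ 2 - d * ((t : ℂ) * r ^ d) ^ 2 := by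
  have hne : ((d + 1 : ℕ) : ℤ) ≠ 0 := by omega
  rw [circleAverage_congr_sphere
      fun w hw ↦ momentDensity_zero_eq (ne_of_mem_sphere hw (by norm_num)),
    circleAverage_fun_sub, circleAverage_fun_add, circleAverage_const, circleAverage_fun_smul,
    circleAverage_fun_smul, circleAverage_zpow_eq_zero hne,
    circleAverage_zpow_eq_zero (neg_ne_zero.2 hne)]
  · simp
  all_goals fun_prop (disch := exact fun w hw ↦ Or.inl (ne_of_mem_sphere hw (by norm_num)))

theorem momentDensity_inv_eq (m : ℕ) {v : ℂ} (hv : v ≠ 0) :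
    momentDensity d r t (d + 1 + m) v⁻¹ = v ^ m * (((r : ℂ) * v ^ (d + 1) + t * r ^ d)
      * (r - d * (t * r ^ d) * v ^ (d + 1)) / (r + t * r ^ d * v ^ (d + 1)) ^ (d + 1 + m)) := by
  have hpsi : psi d r t v⁻¹ = (r + t * r ^ d * v ^ (d + 1)) / v := by
    rw [psi, inv_pow]
    field_simp
    ring
  rw [momentDensity, inv_inv, hpsi, zpow_neg, zpow_natCast, div_pow, inv_div, psi, psi', inv_pow]
  field_simp
  ring

theorem circleAverage_momentDensity_add (hr : 0 < r) (ht : 0 ≤ t) (ha : t * r ^ d < r) (m : ℕ) :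
    circleAverage (momentDensity d r t (d + 1 + m)) 0 1 = if m = 0 then (t : ℂ) else 0 := by
  have hden : ∀ v ∈ closedBall (0 : ℂ) 1, (r : ℂ) + t * r ^ d * v ^ (d + 1) ≠ 0 := by
    intro v hv
    refine add_mul_pow_ne_zero _ (by simpa using hv) ?_
    rwa [norm_mul, norm_pow, norm_real, norm_real, Real.norm_of_nonneg ht,
      Real.norm_of_nonneg hr.le]
  have hH : DiffContOnCl ℂ (fun v : ℂ ↦ v ^ m * (((r : ℂ) * v ^ (d + 1) + t * r ^ d)
      * (r - d * (t * r ^ d) * v ^ (d + 1)) / (r + t * r ^ d * v ^ (d + 1)) ^ (d + 1 + m)))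
      (ball 0 |1|) := by
    refine DifferentiableOn.diffContOnCl ?_
    rw [abs_one, closure_ball 0 one_ne_zero]
    intro v hv
    have := pow_ne_zero (d + 1 + m) (hden v hv)
    apply DifferentiableAt.differentiableWithinAt
    fun_prop (disch := assumption)
  rw [← circleAverage_zero_one_congr_inv, circleAverage_congr_sphere
    fun v hv ↦ momentDensity_inv_eq m (ne_of_mem_sphere hv (by norm_num)), hH.circleAverage]
  rcases m with _ | m
  · have hr0 : (r : ℂ) ≠ 0 := by exact_mod_cast hr.ne'
    simp only [pow_zero, one_mul, add_zero, zero_pow (Nat.succ_ne_zero d), mul_zero, zero_add,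
      sub_zero, if_pos]
    field_simp
    ring
  · simp

end Psi

theorem stmt1_general (d : ℕ) (hd : 2 ≤ d) (t t₀ r : ℝ)
    (ht : 0 < t)
    (hrpos : 0 < r)
    (hrcrit : r < ((d : ℝ) * t) ^ (-1 / ((d : ℝ) - 1)))
    (hreq : t₀ = r ^ 2 - d * t ^ 2 * r ^ (2 * d))
    (k : ℕ) :
    (1 / (2 * (Real.pi : ℂ))) *
        ∫ θ in (0:ℝ)..(2 * Real.pi),
          psi d r t (Complex.exp (-(θ : ℂ) * Complex.I))
            * psi d r t (Complex.exp ((θ : ℂ) * Complex.I)) ^ (-(k : ℤ))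
            * psi' d r t (Complex.exp ((θ : ℂ) * Complex.I))
            * Complex.exp ((θ : ℂ) * Complex.I)
      = if k = 0 then (t₀ : ℂ) else if k = d + 1 then (t : ℂ) else 0 := by
  trans circleAverage (momentDensity d r t k) 0 1
  · simp only [circleAverage_def, circleMap_zero, ofReal_one, one_mul, momentDensity, neg_mul,
      Complex.exp_neg, real_smul]
    push_cast
    ring
  rcases Nat.lt_or_ge k (d + 1) with hk | hk
  · rcases Nat.eq_zero_or_pos k with rfl | hk0
    · rw [circleAverage_momentDensity_zero, hreq, if_pos rfl]
      push_cast
      ring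
    · rw [circleAverage_momentDensity_of_not_dvd (Nat.not_dvd_of_pos_of_lt hk0 hk),
        if_neg hk0.ne', if_neg hk.ne]
  · obtain ⟨m, rfl⟩ := Nat.exists_eq_add_of_le hk
    rw [circleAverage_momentDensity_add hrpos ht.le (mul_pow_lt_of_lt_rpow hd ht hrpos hrcrit)]
    simp

/-- Harmonic moment identities for the Laplacian growth domain bounded by `ψ({|w|=1})`:
`(1/2π) ∫_0^{2π} ψ(e^{-iθ}) ψ(e^{iθ})^{-k} ψ'(e^{iθ}) e^{iθ} dθ` equals `t₀` for `k = 0`,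
`t` for `k = d+1`, and `0` otherwise. -/
theorem stmt1 (d : ℕ) (hd : 2 ≤ d) (t t₀ r : ℝ)
    (ht : 0 < t) (ht₀pos : 0 < t₀)
    (ht₀crit : t₀ < ((d : ℝ) ^ (-2 / ((d : ℝ) - 1)) - (d : ℝ) ^ (-((d : ℝ) + 1) / ((d : ℝ) - 1)))
        * t ^ (-2 / ((d : ℝ) - 1)))
    (hrpos : 0 < r)
    (hrcrit : r < ((d : ℝ) * t) ^ (-1 / ((d : ℝ) - 1)))
    (hreq : t₀ = r ^ 2 - d * t ^ 2 * r ^ (2 * d))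
    (k : ℕ) :
    (1 / (2 * (Real.pi : ℂ))) *
        ∫ θ in (0:ℝ)..(2 * Real.pi),
          psi d r t (Complex.exp (-(θ : ℂ) * Complex.I))
            * psi d r t (Complex.exp ((θ : ℂ) * Complex.I)) ^ (-(k : ℤ))
            * psi' d r t (Complex.exp ((θ : ℂ) * Complex.I))
            * Complex.exp ((θ : ℂ) * Complex.I)
      = if k = 0 then (t₀ : ℂ) else if k = d + 1 then (t : ℂ) else 0 :=
  stmt1_general d hd t t₀ r ht hrpos hrcrit hreq k
end

section
/- Let d ≥ 2 be an integer and r > 0, t > 0. Then ψ is injective on the set {w ∈ ℂ : |w| ≥ ρ}; that is, if |w₁| ≥ ρ, |w₂| ≥ ρ and ψ(w₁) = ψ(w₂), then w₁ = w₂. -/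
/-!
Write `u = w₁⁻¹`, `v = w₂⁻¹`. Since `ψ(w) = r/u + t rᵈ uᵈ`, the equation `ψ(w₁) = ψ(w₂)` with
`u ≠ v` can be divided by `u - v` and becomes `r = t rᵈ · u v ∑ uⁱ vᵈ⁻¹⁻ⁱ`. For `‖u‖, ‖v‖ ≤ ρ⁻¹` the
right-hand side has norm at most `t rᵈ d ρ⁻⁽ᵈ⁺¹⁾ = r`, with equality impossible by strict convexity
of the disc, which forbids `‖u + v‖ = 2ρ⁻¹` for `u ≠ v`.
-/

open Complex

/-- `ρ = (d·t·r^{d-1})^{1/(d+1)}`. -/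
noncomputable def rho (d : ℕ) (r t : ℝ) : ℝ :=
  ((d : ℝ) * t * r ^ (d - 1)) ^ ((1 : ℝ) / ((d : ℝ) + 1))

open Finset

theorem norm_add_lt_two_mul_of_ne {E : Type*} [NormedAddCommGroup E] [NormedSpace ℝ E]
    [StrictConvexSpace ℝ E] {x y : E} {M : ℝ} (hx : ‖x‖ ≤ M) (hy : ‖y‖ ≤ M) (hne : x ≠ y) :
    ‖x + y‖ < 2 * M := by
  have h := norm_combo_lt_of_ne hx hy hne (a := 1 / 2) (b := 1 / 2) (by norm_num) (by norm_num)
    (by norm_num)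
  rw [← smul_add, norm_smul] at h
  norm_num at h
  linarith

theorem norm_pow_mul_pow_le {𝕜 : Type*} [NormedField 𝕜] {x y : 𝕜} {M : ℝ} (hx : ‖x‖ ≤ M)
    (hy : ‖y‖ ≤ M) (i j : ℕ) : ‖x ^ i * y ^ j‖ ≤ M ^ (i + j) := by
  have hM : 0 ≤ M := (norm_nonneg _).trans hx
  rw [norm_mul, norm_pow, norm_pow, pow_add]
  gcongr

section StrictlyConvexField

variable {𝕜 : Type*} [NormedField 𝕜] [NormedSpace ℝ 𝕜] [StrictConvexSpace ℝ 𝕜]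
  {x y : 𝕜} {M : ℝ}

/-- The bound `‖∑ xⁱ yⁿ⁻¹⁻ⁱ‖ ≤ n Mⁿ⁻¹` is strict: the two terms `yⁿ⁻¹ + x yⁿ⁻²` already
contribute at most `Mⁿ⁻² ‖x + y‖ < 2 Mⁿ⁻¹`. -/
theorem norm_geom_sum₂_lt (hx : ‖x‖ ≤ M) (hy : ‖y‖ ≤ M) (hne : x ≠ y) {n : ℕ} (hn : 2 ≤ n) :
    ‖∑ i ∈ range n, x ^ i * y ^ (n - 1 - i)‖ < n * M ^ (n - 1) := by
  obtain ⟨m, rfl⟩ : ∃ m, n = m + 2 := ⟨n - 2, by omega⟩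
  have hxy := norm_add_lt_two_mul_of_ne hx hy hne
  have hM : 0 < M := by linarith [norm_nonneg (x + y)]
  have hhead : ‖y ^ m * (x + y)‖ < 2 * M ^ (m + 1) := by
    rw [norm_mul, norm_pow]
    calc ‖y‖ ^ m * ‖x + y‖ ≤ M ^ m * ‖x + y‖ := by gcongr
      _ < M ^ m * (2 * M) := by gcongr
      _ = 2 * M ^ (m + 1) := by ring
  have htail : ‖∑ i ∈ range m, x ^ (i + 1 + 1) * y ^ (m + 2 - 1 - (i + 1 + 1))‖
      ≤ m * M ^ (m + 1) := by
    refine (norm_sum_le _ _).trans ?_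
    calc ∑ i ∈ range m, ‖x ^ (i + 1 + 1) * y ^ (m + 2 - 1 - (i + 1 + 1))‖
        ≤ ∑ _i ∈ range m, M ^ (m + 1) := by
          refine sum_le_sum fun i hi => ?_
          have := norm_pow_mul_pow_le hx hy (i + 1 + 1) (m + 2 - 1 - (i + 1 + 1))
          rwa [show i + 1 + 1 + (m + 2 - 1 - (i + 1 + 1)) = m + 1 by
            have := mem_range.mp hi; omega] at this
      _ = m * M ^ (m + 1) := by simp
  have hsplit : x ^ (0 + 1) * y ^ (m + 2 - 1 - (0 + 1)) + x ^ 0 * y ^ (m + 2 - 1 - 0)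
      = y ^ m * (x + y) := by
    simp only [show m + 2 - 1 - (0 + 1) = m by omega, show m + 2 - 1 - 0 = m + 1 by omega]
    ring
  rw [sum_range_succ', sum_range_succ', add_assoc, hsplit]
  calc _ ≤ _ := norm_add_le _ _
    _ < m * M ^ (m + 1) + 2 * M ^ (m + 1) := add_lt_add_of_le_of_lt htail hhead
    _ = _ := by push_cast; ring_nf

theorem norm_mul_mul_geom_sum₂_lt (hx : ‖x‖ ≤ M) (hy : ‖y‖ ≤ M) (hne : x ≠ y) {n : ℕ}
    (hn : 2 ≤ n) : ‖x * y * ∑ i ∈ range n, x ^ i * y ^ (n - 1 - i)‖ < n * M ^ (n + 1) := by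
  have hsum := norm_geom_sum₂_lt hx hy hne hn
  have hM : 0 < M := by linarith [norm_nonneg (x + y), norm_add_lt_two_mul_of_ne hx hy hne]
  rw [norm_mul, norm_mul]
  calc ‖x‖ * ‖y‖ * ‖∑ i ∈ range n, x ^ i * y ^ (n - 1 - i)‖
      ≤ M * M * ‖∑ i ∈ range n, x ^ i * y ^ (n - 1 - i)‖ := by gcongr
    _ < M * M * (n * M ^ (n - 1)) := by gcongr
    _ = n * M ^ (n + 1) := by
      rw [show n + 1 = n - 1 + 2 by omega, pow_add]; ring

end StrictlyConvexField

theorem psi_sub_psi (d : ℕ) (r t : ℝ) {w₁ w₂ : ℂ} (hw₁ : w₁ ≠ 0) (hw₂ : w₂ ≠ 0) :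
    psi d r t w₁ - psi d r t w₂ = (w₁⁻¹ - w₂⁻¹) * w₁ * w₂ *
      (t * r ^ d * (w₁⁻¹ * w₂⁻¹ * ∑ i ∈ range d, w₁⁻¹ ^ i * w₂⁻¹ ^ (d - 1 - i)) - r) := by
  have hgeom := geom_sum₂_mul w₁⁻¹ w₂⁻¹ d
  have h₁ : w₁ * w₁⁻¹ = 1 := mul_inv_cancel₀ hw₁
  have h₂ : w₂ * w₂⁻¹ = 1 := mul_inv_cancel₀ hw₂
  set S := ∑ i ∈ range d, w₁⁻¹ ^ i * w₂⁻¹ ^ (d - 1 - i)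
  unfold psi
  rw [div_eq_mul_inv, div_eq_mul_inv, ← inv_pow, ← inv_pow]
  linear_combination (-(t : ℂ) * r ^ d) * hgeom
    - (t * r ^ d * S * (w₁⁻¹ - w₂⁻¹) * w₂ * w₂⁻¹ - r * w₂) * h₁
    - (t * r ^ d * S * (w₁⁻¹ - w₂⁻¹) + r * w₁) * h₂

theorem rho_pos {d : ℕ} {r t : ℝ} (hr : 0 < r) (ht : 0 < t) (hd : 1 ≤ d) : 0 < rho d r t := by
  unfold rho
  have : (0 : ℝ) < d := by exact_mod_cast hd
  positivity

theorem rho_pow_succ (d : ℕ) {r t : ℝ} (hr : 0 ≤ r) (ht : 0 ≤ t) :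
    rho d r t ^ (d + 1) = d * t * r ^ (d - 1) := by
  unfold rho
  rw [one_div, show (d : ℝ) + 1 = ((d + 1 : ℕ) : ℝ) by push_cast; rfl,
    Real.rpow_inv_natCast_pow (by positivity) d.succ_ne_zero]

theorem mul_inv_rho_pow_succ {d : ℕ} {r t : ℝ} (hr : 0 < r) (ht : 0 < t) (hd : 1 ≤ d) :
    t * r ^ d * (d * (rho d r t)⁻¹ ^ (d + 1)) = r := by
  have : (0 : ℝ) < d := by exact_mod_cast hd
  rw [inv_pow, rho_pow_succ d hr.le ht.le, ← Nat.sub_add_cancel hd, pow_succ]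
  field_simp
  simp

/-- `ψ` is injective on the set `{w : ρ ≤ |w|}`. -/
theorem stmt2 (d : ℕ) (hd : 2 ≤ d) (r t : ℝ) (hr : 0 < r) (ht : 0 < t)
    (w₁ w₂ : ℂ)
    (h₁ : rho d r t ≤ ‖w₁‖)
    (h₂ : rho d r t ≤ ‖w₂‖)
    (heq : psi d r t w₁ = psi d r t w₂) :
    w₁ = w₂ := by
  set ρ := rho d r t
  have hρ : 0 < ρ := rho_pos hr ht (one_le_two.trans hd)
  have hw₁ : w₁ ≠ 0 := norm_pos_iff.mp (hρ.trans_le h₁)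
  have hw₂ : w₂ ≠ 0 := norm_pos_iff.mp (hρ.trans_le h₂)
  by_contra hne
  have hinv : w₁⁻¹ ≠ w₂⁻¹ := inv_injective.ne hne
  set P := w₁⁻¹ * w₂⁻¹ * ∑ i ∈ range d, w₁⁻¹ ^ i * w₂⁻¹ ^ (d - 1 - i)
  have hcrit : t * r ^ d * P = r := by
    have h := psi_sub_psi d r t hw₁ hw₂
    rw [heq, sub_self, eq_comm] at h
    exact sub_eq_zero.mp <|
      (mul_eq_zero.mp h).resolve_left (mul_ne_zero (mul_ne_zero (sub_ne_zero.mpr hinv) hw₁) hw₂)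
  have hP : ‖P‖ < d * ρ⁻¹ ^ (d + 1) := by
    refine norm_mul_mul_geom_sum₂_lt ?_ ?_ hinv hd <;> rw [norm_inv] <;> gcongr
  have hcrit_norm : t * r ^ d * ‖P‖ = r := by
    simpa [abs_of_pos hr, abs_of_pos ht] using congrArg norm hcrit
  refine lt_irrefl r ?_
  calc r = t * r ^ d * ‖P‖ := hcrit_norm.symm
    _ < t * r ^ d * (d * ρ⁻¹ ^ (d + 1)) := by gcongr
    _ = r := mul_inv_rho_pow_succ hr ht (one_le_two.trans hd)
end

section
/- Let d ≥ 2 be an integer and let λ₁, λ₂ ∈ ℂ satisfy |λ₁| ≥ |λ₂| ≥ 1. If λ₁^d · λ₂^d = (1/d) · ∑_{j=0}^{d−1} λ₁^{d−1−j} · λ₂^{j}, then λ₁ = λ₂. -/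
/-!
Comparing each term of the sum with `‖λ₁‖ ^ (d - 1)` gives `‖λ₁‖ᵈ ‖λ₂‖ᵈ ≤ ‖λ₁‖ᵈ⁻¹`, which together
with `1 ≤ ‖λ₂‖ ≤ ‖λ₁‖` forces `‖λ₁‖ = ‖λ₂‖ = 1`. The identity then says that the unit vector
`(λ₁ λ₂)ᵈ` is the average of the `d` unit vectors `λ₁ᵈ⁻¹⁻ʲ λ₂ʲ`; by strict convexity of the
closed unit disc they all coincide, and comparing `j = 0` with `j = 1` gives `λ₁ = λ₂`.
-/

open Finset

lemma norm_sum_pow_mul_pow_le {𝕜 : Type*} [NormedDivisionRing 𝕜] {x y : 𝕜} (hyx : ‖y‖ ≤ ‖x‖)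
    (d : ℕ) : ‖∑ j ∈ range d, x ^ (d - 1 - j) * y ^ j‖ ≤ d * ‖x‖ ^ (d - 1) := by
  calc ‖∑ j ∈ range d, x ^ (d - 1 - j) * y ^ j‖
      ≤ ∑ j ∈ range d, ‖x‖ ^ (d - 1 - j) * ‖y‖ ^ j := by
        simpa only [norm_mul, norm_pow] using
          norm_sum_le (range d) fun j => x ^ (d - 1 - j) * y ^ j
    _ ≤ ∑ _j ∈ range d, ‖x‖ ^ (d - 1) := sum_le_sum fun j hj => by
        calc ‖x‖ ^ (d - 1 - j) * ‖y‖ ^ j ≤ ‖x‖ ^ (d - 1 - j) * ‖x‖ ^ j := by gcongr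
          _ = ‖x‖ ^ (d - 1) := by rw [← pow_add, Nat.sub_add_cancel (by grind)]
    _ = d * ‖x‖ ^ (d - 1) := by simp

lemma norm_eq_one_of_pow_mul_pow_eq_average {𝕜 : Type*} [RCLike 𝕜] {d : ℕ} (hd : d ≠ 0)
    {x y : 𝕜} (hy : 1 ≤ ‖y‖) (hyx : ‖y‖ ≤ ‖x‖)
    (heq : x ^ d * y ^ d = (1 / (d : 𝕜)) * ∑ j ∈ range d, x ^ (d - 1 - j) * y ^ j) :
    ‖x‖ = 1 := by
  have hx : 1 ≤ ‖x‖ := hy.trans hyx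
  have hd' : (0 : ℝ) < d := by positivity
  have hsum : d * (‖x‖ ^ d * ‖y‖ ^ d) ≤ d * ‖x‖ ^ (d - 1) := by
    have hS : (d : 𝕜) * (x ^ d * y ^ d) = ∑ j ∈ range d, x ^ (d - 1 - j) * y ^ j := by
      rw [heq]; field_simp
    calc (d : ℝ) * (‖x‖ ^ d * ‖y‖ ^ d) = ‖(d : 𝕜) * (x ^ d * y ^ d)‖ := by
          simp only [norm_mul, norm_pow, RCLike.norm_natCast]
      _ ≤ d * ‖x‖ ^ (d - 1) := hS ▸ norm_sum_pow_mul_pow_le hyx d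
  have : ‖x‖ ^ (d - 1) * ‖x‖ ≤ ‖x‖ ^ (d - 1) * 1 := calc
    ‖x‖ ^ (d - 1) * ‖x‖ = ‖x‖ ^ d := by rw [← pow_succ, Nat.sub_add_cancel (by omega)]
    _ ≤ ‖x‖ ^ d * ‖y‖ ^ d := le_mul_of_one_le_right (by positivity) (one_le_pow₀ hy)
    _ ≤ ‖x‖ ^ (d - 1) * 1 := by simpa using le_of_mul_le_mul_left hsum hd'
  exact le_antisymm (le_of_mul_le_mul_left this (by positivity)) hx

lemma eq_of_le_norm_sum_smul_of_strictConvexSpace {V ι : Type*} [NormedAddCommGroup V]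
    [NormedSpace ℝ V] [StrictConvexSpace ℝ V] {t : Finset ι} {w : ι → ℝ} {r : ℝ} {z : ι → V}
    (h0 : ∀ i ∈ t, 0 ≤ w i) (h1 : ∑ i ∈ t, w i = 1) {i j : ι} (hi : i ∈ t) (hj : j ∈ t)
    (hi0 : w i ≠ 0) (hj0 : w j ≠ 0) (hz : ∀ i ∈ t, ‖z i‖ ≤ r)
    (hr : r ≤ ‖∑ k ∈ t, w k • z k‖) : z i = z j := by
  by_contra hij
  exact (norm_sum_lt_of_strictConvexSpace h0 h1 hi hj hij hi0 hj0 hz).not_ge hr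

open Complex

/-- Rigidity: if `|λ₁| ≥ |λ₂| ≥ 1` and `λ₁^d λ₂^d = (1/d) ∑_{j=0}^{d-1} λ₁^{d-1-j} λ₂^j`,
then `λ₁ = λ₂`. -/
theorem stmt8 (d : ℕ) (hd : 2 ≤ d) (l₁ l₂ : ℂ)
    (h₂ : 1 ≤ ‖l₂‖) (h₁₂ : ‖l₂‖ ≤ ‖l₁‖)
    (heq : l₁ ^ d * l₂ ^ d = (1 / (d : ℂ)) * ∑ j ∈ Finset.range d, l₁ ^ (d - 1 - j) * l₂ ^ j) :
    l₁ = l₂ := by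
  have hx : ‖l₁‖ = 1 := norm_eq_one_of_pow_mul_pow_eq_average (by omega) h₂ h₁₂ heq
  have hy : ‖l₂‖ = 1 := le_antisymm (hx ▸ h₁₂) h₂
  have hd' : (d : ℝ) ≠ 0 := by positivity
  have hmean : ∑ j ∈ range d, (d : ℝ)⁻¹ • (l₁ ^ (d - 1 - j) * l₂ ^ j) = l₁ ^ d * l₂ ^ d := by
    simp only [real_smul, ← mul_sum, heq]
    push_cast
    ring
  have h01 : l₁ ^ (d - 1) = l₁ ^ (d - 1 - 1) * l₂ := by
    simpa using eq_of_le_norm_sum_smul_of_strictConvexSpace (w := fun _ => (d : ℝ)⁻¹) (r := 1)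
      (z := fun j => l₁ ^ (d - 1 - j) * l₂ ^ j) (fun _ _ => by positivity) (by simp [hd'])
      (mem_range.2 (by omega : 0 < d)) (mem_range.2 (by omega : 1 < d)) (inv_ne_zero hd')
      (inv_ne_zero hd') (fun j _ => by simp [hx, hy]) (by rw [hmean]; simp [hx, hy])
  have hx0 : l₁ ≠ 0 := norm_ne_zero_iff.1 (by simp [hx])
  rw [show d - 1 = d - 1 - 1 + 1 by omega, pow_succ] at h01
  exact mul_left_cancel₀ (pow_ne_zero _ hx0) h01
end

section
/- Let d ≥ 2 be an integer and ω = e^{2πi/(d+1)}. Then there exist lower-triangular complex (d+1)×(d+1) matrices C⁺ and C⁻, both with all diagonal entries equal to 1, such that (I + ∑_{j=1}^{⌈d/2⌉} E_{2j−1,2j}) · C⁺ = C⁻ · D₁ and (Λ + ∑_{j=1}^{⌊d/2⌋} E_{2j,2j+1}) · C⁻ = C⁺ · D₂. Here Λ is the diagonal matrix with Λ_{1,1} = 1, Λ_{2j,2j} = ω^{−j} and Λ_{2j+1,2j+1} = ω^{j}; D₁ is the block-diagonal matrix consisting of (d+1)/2 blocks iσ₂ if d is odd, and of d/2 blocks iσ₂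 followed by a final diagonal entry 1 if d is even; D₂ is the block-diagonal matrix diag(1, iσ₂, …, iσ₂, −1) (entry 1, then (d−1)/2 blocks iσ₂, then entry −1) if d is odd, and diag(1, iσ₂, …, iσ₂) (entry 1, then d/2 blocks iσ₂) if d is even. -/
open Matrix

/-- `ω = e^{2πi/(d+1)}`. -/
noncomputable def omC (d : ℕ) : ℂ := Complex.exp (2 * Real.pi * Complex.I / ((d : ℂ) + 1))

/-- The matrix `I + ∑_{j=1}^{⌈d/2⌉} E_{2j-1,2j}` (1-based indexing), of size `(d+1)×(d+1)`. -/
noncomputable def J1 (d : ℕ) : Matrix (Fin (d + 1)) (Fin (d + 1)) ℂ :=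
  Matrix.of fun i j =>
    (if i = j then (1 : ℂ) else 0) +
      (if (i : ℕ) % 2 = 0 ∧ (j : ℕ) = (i : ℕ) + 1 then 1 else 0)

/-- Diagonal entry of `Λ`: `Λ_{1,1} = 1`, `Λ_{2j,2j} = ω^{-j}`, `Λ_{2j+1,2j+1} = ω^j`
(1-based); here `i` is the 0-based index. -/
noncomputable def lamEntry (d : ℕ) (i : ℕ) : ℂ :=
  if i % 2 = 1 then (omC d ^ ((i + 1) / 2))⁻¹ else omC d ^ (i / 2)

/-- The matrix `Λ + ∑_{j=1}^{⌊d/2⌋} E_{2j,2j+1}` (1-based indexing). -/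
noncomputable def J2 (d : ℕ) : Matrix (Fin (d + 1)) (Fin (d + 1)) ℂ :=
  Matrix.of fun i j =>
    (if i = j then lamEntry d (i : ℕ) else 0) +
      (if (i : ℕ) % 2 = 1 ∧ (j : ℕ) = (i : ℕ) + 1 then 1 else 0)

/-- `D₁`: block-diagonal matrix of `iσ₂` blocks, `(d+1)/2` blocks if `d` is odd, and
`d/2` blocks followed by a final diagonal entry `1` if `d` is even. -/
noncomputable def D1 (d : ℕ) : Matrix (Fin (d + 1)) (Fin (d + 1)) ℂ :=
  Matrix.of fun i j =>
    if (i : ℕ) % 2 = 0 ∧ (j : ℕ) = (i : ℕ) + 1 then (1 : ℂ)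
    else if (i : ℕ) % 2 = 1 ∧ (i : ℕ) = (j : ℕ) + 1 then -1
    else if i = j ∧ (i : ℕ) = d ∧ d % 2 = 0 then 1
    else 0

/-- `D₂`: `diag(1, iσ₂, …, iσ₂, -1)` if `d` is odd, and `diag(1, iσ₂, …, iσ₂)` if `d`
is even. -/
noncomputable def D2 (d : ℕ) : Matrix (Fin (d + 1)) (Fin (d + 1)) ℂ :=
  Matrix.of fun i j =>
    if (i : ℕ) = 0 ∧ (j : ℕ) = 0 then (1 : ℂ)
    else if (i : ℕ) % 2 = 1 ∧ (j : ℕ) = (i : ℕ) + 1 then 1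
    else if (j : ℕ) % 2 = 1 ∧ (i : ℕ) = (j : ℕ) + 1 then -1
    else if i = j ∧ (i : ℕ) = d ∧ d % 2 = 1 then -1
    else 0

/-! Write `A = J₂ J₁`. Read column by column, the two identities determine the columns of `C⁺`
and `C⁻` from the last basis vector `e` downwards: each column is the image of the next one
under `J₁`, `J₂`, `-J₁⁻¹` or `-J₂⁻¹`, depending on parities. These four matrices are upper
bidiagonal with superdiagonal entry `1` exactly where it is needed (for `-J₂⁻¹` because
`Λ_{2j} Λ_{2j+1} = 1`), so every column has a leading `1` on the diagonal and `C^±` are lower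
unitriangular. All identities then hold by construction except the first column of the second
one, which reads `A ^ (⌊d/2⌋ + 1) e = A ^ (-⌈d/2⌉) e`. It follows from `A ^ (d + 1) = 1`, which is
Cayley–Hamilton: `A` is upper triangular with diagonal `Λ`, and the entries of `Λ` are exactly
the `(d + 1)`-th roots of unity. -/
theorem add_mul_sub_mul_mul_eq_one {R : Type*} [Ring R] {a a' n : R} (h : a * a' = 1)
    (hn : n * a' * n = 0) : (a + n) * (a' - a' * n * a') = 1 := by
  calc (a + n) * (a' - a' * n * a') = a * a' - a * a' * n * a' + n * a' - n * a' * n * a' := by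
        noncomm_ring
    _ = 1 := by rw [h, hn]; noncomm_ring

theorem pow_eq_pow_of_pow_eq_one {M : Type*} [Monoid M] {x y : M} {n a b : ℕ} (hx : x ^ n = 1)
    (hxy : x * y = 1) (hab : a + b = n) : x ^ a = y ^ b :=
  calc x ^ a = x ^ a * (x ^ b * y ^ b) := by rw [pow_mul_pow_eq_one b hxy, mul_one]
    _ = y ^ b := by rw [← mul_assoc, ← pow_add, hab, hx, one_mul]

namespace Matrix

variable {ι R : Type*} [Fintype ι] [LinearOrder ι]

theorem IsUpperTriangular.mul_apply_self [NonUnitalNonAssocSemiring R] {M N : Matrix ι ι R}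
    (hM : M.IsUpperTriangular) (hN : N.IsUpperTriangular) (i : ι) :
    (M * N) i i = M i i * N i i := by
  rw [mul_apply, Finset.sum_eq_single i]
  · intro k _ hk
    rcases lt_or_gt_of_ne hk with h | h
    · rw [hM h, zero_mul]
    · rw [hN h, mul_zero]
  · simp

open Polynomial in
theorem IsUpperTriangular.pow_eq_one_of_injective_diag [DecidableEq ι] {K : Type*} [Field K]
    {M : Matrix ι ι K} {n : ℕ} {ζ : K} (hM : M.IsUpperTriangular) (hinj : Function.Injective M.diag)
    (hroot : ∀ i, M i i ^ n = 1) (hζ : IsPrimitiveRoot ζ n) (hcard : Fintype.card ι = n) :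
    M ^ n = 1 := by
  classical
  obtain rfl | hn := n.eq_zero_or_pos
  · exact pow_zero M
  have himage : Finset.univ.image M.diag = nthRootsFinset n (1 : K) := by
    apply Finset.eq_of_subset_of_card_le
    · intro x hx
      obtain ⟨i, -, rfl⟩ := Finset.mem_image.1 hx
      exact (mem_nthRootsFinset hn 1).2 (hroot i)
    · rw [hζ.card_nthRootsFinset, Finset.card_image_of_injective _ hinj, Finset.card_univ, hcard]
  have hprod : ∏ i, (X - C (M i i)) = X ^ n - 1 := by
    rw [X_pow_sub_one_eq_prod hn hζ, ← himage, Finset.prod_image fun i _ j _ h => hinj h]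
    rfl
  have h := aeval_self_charpoly M
  rw [charpoly_of_isUpperTriangular M hM, hprod] at h
  simpa [sub_eq_zero] using h

end Matrix

open Matrix

def LeadingOneAt {R : Type*} [Zero R] [One R] {n : ℕ} (j : ℕ) (v : Fin n → R) : Prop :=
  (∀ i : Fin n, (i : ℕ) < j → v i = 0) ∧ ∀ i : Fin n, (i : ℕ) = j → v i = 1

theorem leadingOneAt_single {R : Type*} [Zero R] [One R] {n : ℕ} (j : Fin n) :
    LeadingOneAt j (Pi.single j (1 : R)) :=
  ⟨fun i hi => Pi.single_eq_of_ne (Fin.ne_of_lt hi) 1, fun i hi => by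
    rw [Fin.ext hi, Pi.single_eq_same]⟩

def upperBidiagonal {R : Type*} [AddZeroClass R] {n : ℕ} (a b : ℕ → R) : Matrix (Fin n) (Fin n) R :=
  of fun i k => (if i = k then a i else 0) + if (k : ℕ) = i + 1 then b i else 0

section upperBidiagonal

variable {R : Type*} {n : ℕ}

theorem upperBidiagonal_isUpperTriangular [AddZeroClass R] (a b : ℕ → R) :
    (upperBidiagonal a b : Matrix (Fin n) (Fin n) R).IsUpperTriangular := by
  intro i k (h : k < i)
  simp only [upperBidiagonal, of_apply]
  rw [if_neg h.ne', if_neg (by omega), add_zero]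

theorem upperBidiagonal_apply_self [AddZeroClass R] (a b : ℕ → R) (i : Fin n) :
    upperBidiagonal a b i i = a i := by
  simp [upperBidiagonal]

theorem upperBidiagonal_apply_of_lt [AddZeroClass R] {a b : ℕ → R} {i k : Fin n}
    (h : (i : ℕ) + 1 < k) : upperBidiagonal a b i k = 0 := by
  simp only [upperBidiagonal, of_apply]
  rw [if_neg (by omega), if_neg (by omega), add_zero]

theorem LeadingOneAt.upperBidiagonal_mulVec [NonAssocSemiring R] {a b : ℕ → R} {j : ℕ}
    {v : Fin n → R} (hv : LeadingOneAt (j + 1) v) (hj : j + 1 < n) (hb : b j = 1) :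
    LeadingOneAt j (upperBidiagonal a b *ᵥ v) := by
  constructor
  · intro i hi
    simp only [mulVec, dotProduct]
    refine Finset.sum_eq_zero fun k _ => ?_
    by_cases hk : (k : ℕ) < j + 1
    · rw [hv.1 k hk, mul_zero]
    · rw [upperBidiagonal_apply_of_lt (by omega), zero_mul]
  · intro i hi
    simp only [mulVec, dotProduct]
    rw [Finset.sum_eq_single ⟨j + 1, hj⟩]
    · rw [hv.2 _ rfl, mul_one]
      simp [upperBidiagonal, Fin.ext_iff, hi, hb]
    · intro k _ hk
      rcases lt_or_gt_of_ne fun h : (k : ℕ) = j + 1 => hk (Fin.ext h) with h | h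
      · rw [hv.1 k h, mul_zero]
      · rw [upperBidiagonal_apply_of_lt (by omega), zero_mul]
    · simp

theorem upperBidiagonal_mulVec_single_last [NonAssocSemiring R] {a b : ℕ → R} (ha : a n = 1)
    (hb : ∀ i, i + 1 = n → b i = 0) :
    upperBidiagonal a b *ᵥ Pi.single (Fin.last n) 1 = Pi.single (Fin.last n) 1 := by
  ext i
  rw [mulVec_single_one]
  by_cases hi : i = Fin.last n
  · subst hi; simp [upperBidiagonal, ha]
  · simpa [upperBidiagonal, hi] using fun h => hb i h.symm

end upperBidiagonal

theorem omC_isPrimitiveRoot (d : ℕ) : IsPrimitiveRoot (omC d) (d + 1) := by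
  simpa [omC] using Complex.isPrimitiveRoot_exp (d + 1) d.succ_ne_zero

section lamEntry

variable {d i : ℕ}

theorem lamEntry_ne_zero : lamEntry d i ≠ 0 := by
  unfold lamEntry; split_ifs <;> simp [omC]

theorem lamEntry_mul_lamEntry_succ (hi : i % 2 = 1) : lamEntry d i * lamEntry d (i + 1) = 1 := by
  rw [lamEntry, lamEntry, if_pos hi, if_neg (by omega)]
  exact inv_mul_cancel₀ (pow_ne_zero _ ((omC_isPrimitiveRoot d).ne_zero d.succ_ne_zero))

theorem lamEntry_self_of_odd (hd : d % 2 = 1) : lamEntry d d = -1 := by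
  have h := (omC_isPrimitiveRoot d).pow_of_dvd (p := (d + 1) / 2) (by omega) ⟨2, by omega⟩
  rw [Nat.div_eq_of_eq_mul_left (by omega) (by omega : d + 1 = 2 * ((d + 1) / 2))] at h
  rw [lamEntry, if_pos hd, h.eq_neg_one_of_two_right, inv_neg, inv_one]

theorem lamEntry_eq_pow (hi : i ≤ d) :
    lamEntry d i = omC d ^ (if i % 2 = 1 then d + 1 - (i + 1) / 2 else i / 2) := by
  unfold lamEntry
  split_ifs
  · refine inv_eq_of_mul_eq_one_right ?_
    rw [← pow_add, Nat.add_sub_cancel' (by omega), (omC_isPrimitiveRoot d).pow_eq_one]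
  · rfl

theorem lamEntry_pow_succ : lamEntry d i ^ (d + 1) = 1 := by
  have h (a : ℕ) : (omC d ^ a) ^ (d + 1) = 1 := by
    rw [← pow_mul, mul_comm, pow_mul, (omC_isPrimitiveRoot d).pow_eq_one, one_pow]
  unfold lamEntry
  split_ifs
  · rw [inv_pow, h, inv_one]
  · exact h _

theorem lamEntry_injective : Function.Injective fun i : Fin (d + 1) => lamEntry d i := by
  intro i j h
  simp only [lamEntry_eq_pow i.is_le, lamEntry_eq_pow j.is_le] at h
  have := (omC_isPrimitiveRoot d).pow_inj (by split_ifs <;> omega) (by split_ifs <;> omega) h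
  ext
  split_ifs at this <;> omega

end lamEntry

def parityShift (d p : ℕ) : Matrix (Fin (d + 1)) (Fin (d + 1)) ℂ :=
  of fun i k => if (i : ℕ) % 2 = p ∧ (k : ℕ) = i + 1 then 1 else 0

theorem parityShift_mul_diagonal_mul_self (d p : ℕ) (c : Fin (d + 1) → ℂ) :
    parityShift d p * diagonal c * parityShift d p = 0 := by
  ext i k
  rw [mul_apply, Matrix.zero_apply]
  refine Finset.sum_eq_zero fun l _ => ?_
  rw [mul_diagonal]
  simp only [parityShift, of_apply]
  split_ifs <;> first | omega | simp

noncomputable def lamInvDiag (d : ℕ) : Matrix (Fin (d + 1)) (Fin (d + 1)) ℂ :=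
  diagonal fun i => (lamEntry d i)⁻¹

noncomputable def J1inv (d : ℕ) : Matrix (Fin (d + 1)) (Fin (d + 1)) ℂ := 1 - parityShift d 0

noncomputable def J2inv (d : ℕ) : Matrix (Fin (d + 1)) (Fin (d + 1)) ℂ :=
  lamInvDiag d - lamInvDiag d * parityShift d 1 * lamInvDiag d

section Jumps

variable (d : ℕ)

theorem J1_eq_one_add : J1 d = 1 + parityShift d 0 := by
  ext i k
  simp [J1, parityShift, one_apply]

theorem J2_eq_diagonal_add :
    J2 d = diagonal (fun i : Fin (d + 1) => lamEntry d i) + parityShift d 1 := by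
  ext i k
  simp [J2, parityShift, diagonal_apply]

theorem J1_mul_J1inv : J1 d * J1inv d = 1 := by
  simpa [J1_eq_one_add, J1inv] using add_mul_sub_mul_mul_eq_one (a := 1) (a' := 1)
    (n := parityShift d 0) (mul_one 1) (by simpa using parityShift_mul_diagonal_mul_self d 0 1)

theorem J2_mul_J2inv : J2 d * J2inv d = 1 := by
  rw [J2_eq_diagonal_add, J2inv]
  refine add_mul_sub_mul_mul_eq_one ?_ (parityShift_mul_diagonal_mul_self d 1 _)
  simp [lamInvDiag, mul_inv_cancel₀ lamEntry_ne_zero]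

theorem J1_eq_upperBidiagonal : J1 d = upperBidiagonal 1 fun i => if i % 2 = 0 then 1 else 0 := by
  ext i k
  simp only [J1, of_apply, upperBidiagonal, Pi.one_apply, add_right_inj]
  split_ifs <;> simp_all

theorem J2_eq_upperBidiagonal :
    J2 d = upperBidiagonal (lamEntry d) fun i => if i % 2 = 1 then 1 else 0 := by
  ext i k
  simp only [J2, of_apply, upperBidiagonal, add_right_inj]
  split_ifs <;> simp_all

theorem neg_J1inv_eq_upperBidiagonal :
    -J1inv d = upperBidiagonal (-1) fun i => if i % 2 = 0 then 1 else 0 := by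
  ext i k
  by_cases hik : i = k
  · subst hik
    simp [J1inv, upperBidiagonal, parityShift]
  · by_cases hk : (k : ℕ) = i + 1 <;> simp [J1inv, upperBidiagonal, parityShift, hik, hk]

theorem neg_J2inv_eq_upperBidiagonal :
    -J2inv d = upperBidiagonal (fun i => -(lamEntry d i)⁻¹)
      fun i => if i % 2 = 1 then (lamEntry d i)⁻¹ * (lamEntry d (i + 1))⁻¹ else 0 := by
  ext i k
  by_cases hik : i = k
  · subst hik
    simp [J2inv, lamInvDiag, upperBidiagonal, parityShift]
  · by_cases hk : (k : ℕ) = i + 1 <;>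
      simp [J2inv, lamInvDiag, upperBidiagonal, parityShift, hik, hk]

end Jumps

theorem J2_mul_J1_pow_succ (d : ℕ) : (J2 d * J1 d) ^ (d + 1) = 1 := by
  have hJ1 := J1_eq_upperBidiagonal d ▸ upperBidiagonal_isUpperTriangular _ _
  have hJ2 := J2_eq_upperBidiagonal d ▸ upperBidiagonal_isUpperTriangular _ _
  have hdiag (i : Fin (d + 1)) : (J2 d * J1 d) i i = lamEntry d i := by
    rw [hJ2.mul_apply_self hJ1, J1_eq_upperBidiagonal, J2_eq_upperBidiagonal,
      upperBidiagonal_apply_self, upperBidiagonal_apply_self, Pi.one_apply, mul_one]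
  refine IsUpperTriangular.pow_eq_one_of_injective_diag (hJ2.mul hJ1) (fun i j h => ?_)
    (fun i => ?_) (omC_isPrimitiveRoot d) (Fintype.card_fin _)
  · simp only [diag, hdiag] at h
    exact lamEntry_injective h
  · rw [hdiag]
    exact lamEntry_pow_succ

theorem J2_mul_J1_mul_J1inv_mul_J2inv (d : ℕ) : J2 d * J1 d * (J1inv d * J2inv d) = 1 := by
  rw [mul_assoc, ← mul_assoc (J1 d), J1_mul_J1inv, one_mul, J2_mul_J2inv]

noncomputable def lensColumns (d j : ℕ) : (Fin (d + 1) → ℂ) × (Fin (d + 1) → ℂ) :=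
  if d ≤ j then (Pi.single (Fin.last d) 1, Pi.single (Fin.last d) 1)
  else
    let c := lensColumns d (j + 1)
    if j % 2 = 1 then (J2 d *ᵥ c.2, (-J2inv d) *ᵥ c.1) else ((-J1inv d) *ᵥ c.2, J1 d *ᵥ c.1)
termination_by d - j

noncomputable def cPlusCol (d j : ℕ) : Fin (d + 1) → ℂ := (lensColumns d j).1

noncomputable def cMinusCol (d j : ℕ) : Fin (d + 1) → ℂ := (lensColumns d j).2

section lensColumns

variable {d j : ℕ}

theorem cPlusCol_of_le (h : d ≤ j) : cPlusCol d j = Pi.single (Fin.last d) 1 := by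
  rw [cPlusCol, lensColumns, if_pos h]

theorem cMinusCol_of_le (h : d ≤ j) : cMinusCol d j = Pi.single (Fin.last d) 1 := by
  rw [cMinusCol, lensColumns, if_pos h]

theorem cPlusCol_of_odd (hj : j < d) (hp : j % 2 = 1) :
    cPlusCol d j = J2 d *ᵥ cMinusCol d (j + 1) := by
  rw [cPlusCol, lensColumns, if_neg (by omega), if_pos hp]
  rfl

theorem cPlusCol_of_even (hj : j < d) (hp : j % 2 = 0) :
    cPlusCol d j = (-J1inv d) *ᵥ cMinusCol d (j + 1) := by
  rw [cPlusCol, lensColumns, if_neg (by omega), if_neg (by omega)]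
  rfl

theorem cMinusCol_of_odd (hj : j ≤ d) (hp : j % 2 = 1) :
    cMinusCol d j = (-J2inv d) *ᵥ cPlusCol d (j + 1) := by
  obtain hj | rfl := hj.lt_or_eq
  · rw [cMinusCol, lensColumns, if_neg (by omega), if_pos hp]
    rfl
  · rw [cMinusCol_of_le le_rfl, cPlusCol_of_le (by omega), neg_J2inv_eq_upperBidiagonal,
      upperBidiagonal_mulVec_single_last]
    · rw [lamEntry_self_of_odd hp, inv_neg, inv_one, neg_neg]
    · intro i hi
      rw [if_neg (by omega)]

theorem cMinusCol_of_even (hj : j ≤ d) (hp : j % 2 = 0) :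
    cMinusCol d j = J1 d *ᵥ cPlusCol d (j + 1) := by
  obtain hj | rfl := hj.lt_or_eq
  · rw [cMinusCol, lensColumns, if_neg (by omega), if_neg (by omega)]
    rfl
  · rw [cMinusCol_of_le le_rfl, cPlusCol_of_le (by omega), J1_eq_upperBidiagonal,
      upperBidiagonal_mulVec_single_last rfl]
    intro i hi
    rw [if_neg (by omega)]

end lensColumns

theorem leadingOneAt_lensColumns {d j : ℕ} (hj : j ≤ d) :
    LeadingOneAt j (cPlusCol d j) ∧ LeadingOneAt j (cMinusCol d j) := by
  obtain rfl | hj := hj.eq_or_lt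
  · rw [cPlusCol_of_le le_rfl, cMinusCol_of_le le_rfl]
    exact ⟨leadingOneAt_single (Fin.last j), leadingOneAt_single (Fin.last j)⟩
  obtain ⟨hp, hm⟩ := leadingOneAt_lensColumns (d := d) (j := j + 1) hj
  rcases Nat.mod_two_eq_zero_or_one j with h | h
  · rw [cPlusCol_of_even hj h, cMinusCol_of_even hj.le h, neg_J1inv_eq_upperBidiagonal,
      J1_eq_upperBidiagonal]
    exact ⟨hm.upperBidiagonal_mulVec (by omega) (if_pos h),
      hp.upperBidiagonal_mulVec (by omega) (if_pos h)⟩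
  · rw [cPlusCol_of_odd hj h, cMinusCol_of_odd hj.le h, neg_J2inv_eq_upperBidiagonal,
      J2_eq_upperBidiagonal]
    refine ⟨hm.upperBidiagonal_mulVec (by omega) (if_pos h),
      hp.upperBidiagonal_mulVec (by omega) ?_⟩
    rw [if_pos h, ← mul_inv, lamEntry_mul_lamEntry_succ h, inv_one]
termination_by d - j

theorem cPlusCol_eq_pow (d j : ℕ) :
    cPlusCol d j = (if j % 2 = 1 then J2 d * J1 d else J1inv d * J2inv d) ^ ((d + 1 - j) / 2) *ᵥ
      Pi.single (Fin.last d) 1 := by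
  by_cases hj : d ≤ j
  · rw [cPlusCol_of_le hj, Nat.div_eq_of_lt (by omega), pow_zero, one_mulVec]
  have ih := cPlusCol_eq_pow d (j + 2)
  rw [show (j + 2) % 2 = j % 2 by omega] at ih
  rw [show (d + 1 - j) / 2 = (d + 1 - (j + 2)) / 2 + 1 by omega, pow_succ', ← mulVec_mulVec,
    ← ih]
  rcases Nat.mod_two_eq_zero_or_one j with h | h
  · rw [cPlusCol_of_even (by omega) h, cMinusCol_of_odd (by omega) (by omega), if_neg (by omega),
      mulVec_mulVec, neg_mul_neg]
  · rw [cPlusCol_of_odd (by omega) h, cMinusCol_of_even (by omega) (by omega), if_pos h,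
      mulVec_mulVec]
termination_by d - j

noncomputable def cPlus (d : ℕ) : Matrix (Fin (d + 1)) (Fin (d + 1)) ℂ :=
  of fun i j => cPlusCol d j i

noncomputable def cMinus (d : ℕ) : Matrix (Fin (d + 1)) (Fin (d + 1)) ℂ :=
  of fun i j => cMinusCol d j i

section columns

variable {d : ℕ}

theorem cPlus_mulVec_single (k : Fin (d + 1)) : cPlus d *ᵥ Pi.single k 1 = cPlusCol d k :=
  mulVec_single_one _ k

theorem cMinus_mulVec_single (k : Fin (d + 1)) : cMinus d *ᵥ Pi.single k 1 = cMinusCol d k :=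
  mulVec_single_one _ k

variable {j k : Fin (d + 1)}

theorem D1_col_of_odd (hj : (j : ℕ) % 2 = 1) (hk : (k : ℕ) + 1 = j) :
    (fun i => D1 d i j) = Pi.single k 1 := by
  funext i
  simp only [D1, of_apply, Pi.single_apply, Fin.ext_iff]
  split_ifs <;> first | rfl | omega

theorem D1_col_of_even (hj : (j : ℕ) % 2 = 0) (hk : (k : ℕ) = j + 1) :
    (fun i => D1 d i j) = -Pi.single k 1 := by
  funext i
  simp only [D1, of_apply, Pi.neg_apply, Pi.single_apply, Fin.ext_iff]
  split_ifs <;> first | rfl | omega | simp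

theorem D1_col_last (hd : d % 2 = 0) :
    (fun i => D1 d i (Fin.last d)) = Pi.single (Fin.last d) 1 := by
  funext i
  simp only [D1, of_apply, Pi.single_apply, Fin.ext_iff, Fin.val_last]
  split_ifs <;> first | rfl | omega

theorem D2_col_zero : (fun i => D2 d i 0) = Pi.single 0 1 := by
  funext i
  simp only [D2, of_apply, Pi.single_apply, Fin.ext_iff, Fin.val_zero]
  split_ifs <;> simp_all

theorem D2_col_of_even (hj : (j : ℕ) % 2 = 0) (hk : (k : ℕ) + 1 = j) :
    (fun i => D2 d i j) = Pi.single k 1 := by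
  funext i
  simp only [D2, of_apply, Pi.single_apply, Fin.ext_iff]
  split_ifs <;> first | rfl | omega

theorem D2_col_of_odd (hj : (j : ℕ) % 2 = 1) (hk : (k : ℕ) = j + 1) :
    (fun i => D2 d i j) = -Pi.single k 1 := by
  funext i
  simp only [D2, of_apply, Pi.neg_apply, Pi.single_apply, Fin.ext_iff]
  split_ifs <;> first | rfl | omega | simp

theorem D2_col_last (hd : d % 2 = 1) :
    (fun i => D2 d i (Fin.last d)) = -Pi.single (Fin.last d) 1 := by
  funext i
  simp only [D2, of_apply, Pi.neg_apply, Pi.single_apply, Fin.ext_iff, Fin.val_last]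
  split_ifs <;> first | rfl | omega | simp

end columns

theorem J1_mul_cPlus (d : ℕ) : J1 d * cPlus d = cMinus d * D1 d := by
  ext i j
  suffices J1 d *ᵥ cPlusCol d j = cMinus d *ᵥ fun k => D1 d k j from congrFun this i
  rcases Nat.mod_two_eq_zero_or_one j with hp | hp
  · obtain hjd | hjd := j.is_le.lt_or_eq
    · obtain ⟨k, hk⟩ : ∃ k : Fin (d + 1), (k : ℕ) = j + 1 := ⟨⟨j + 1, by omega⟩, rfl⟩
      rw [D1_col_of_even hp hk, mulVec_neg, cMinus_mulVec_single, cPlusCol_of_even hjd hp, hk,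
        mulVec_mulVec, mul_neg, J1_mul_J1inv, neg_mulVec, one_mulVec]
    · obtain rfl : j = Fin.last d := Fin.ext hjd
      rw [D1_col_last (by simpa using hp), cMinus_mulVec_single, Fin.val_last,
        cMinusCol_of_even le_rfl (by simpa using hp), cPlusCol_of_le le_rfl,
        cPlusCol_of_le (Nat.le_succ d)]
  · obtain ⟨k, hk⟩ : ∃ k : Fin (d + 1), (k : ℕ) + 1 = j := ⟨⟨j - 1, by omega⟩, Nat.sub_add_cancel (by omega)⟩
    rw [D1_col_of_odd hp hk, cMinus_mulVec_single, cMinusCol_of_even k.is_le (by omega), hk]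

theorem J2_mul_cMinus (d : ℕ) : J2 d * cMinus d = cPlus d * D2 d := by
  ext i j
  suffices J2 d *ᵥ cMinusCol d j = cPlus d *ᵥ fun k => D2 d k j from congrFun this i
  rcases Nat.mod_two_eq_zero_or_one j with hp | hp
  · obtain h0 | h0 := Nat.eq_zero_or_pos j
    · obtain rfl : j = 0 := Fin.ext h0
      rw [D2_col_zero, cPlus_mulVec_single, Fin.val_zero, cMinusCol_of_even (Nat.zero_le d) rfl,
        mulVec_mulVec, cPlusCol_eq_pow, cPlusCol_eq_pow, if_pos rfl, if_neg (by omega),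
        mulVec_mulVec, ← pow_succ']
      congr 1
      exact pow_eq_pow_of_pow_eq_one (J2_mul_J1_pow_succ d) (J2_mul_J1_mul_J1inv_mul_J2inv d)
        (by omega)
    · obtain ⟨k, hk⟩ : ∃ k : Fin (d + 1), (k : ℕ) + 1 = j := ⟨⟨j - 1, by omega⟩, Nat.sub_add_cancel (by omega)⟩
      rw [D2_col_of_even hp hk, cPlus_mulVec_single, cPlusCol_of_odd (by omega) (by omega), hk]
  · obtain hjd | hjd := j.is_le.lt_or_eq
    · obtain ⟨k, hk⟩ : ∃ k : Fin (d + 1), (k : ℕ) = j + 1 := ⟨⟨j + 1, by omega⟩, rfl⟩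
      rw [D2_col_of_odd hp hk, mulVec_neg, cPlus_mulVec_single, cMinusCol_of_odd hjd.le hp, hk,
        mulVec_mulVec, mul_neg, J2_mul_J2inv, neg_mulVec, one_mulVec]
    · obtain rfl : j = Fin.last d := Fin.ext hjd
      rw [D2_col_last (by simpa using hp), mulVec_neg, cPlus_mulVec_single, Fin.val_last,
        cMinusCol_of_odd le_rfl (by simpa using hp), mulVec_mulVec, mul_neg, J2_mul_J2inv,
        neg_mulVec, one_mulVec, cPlusCol_of_le le_rfl, cPlusCol_of_le (Nat.le_succ d)]

theorem stmt9_general (d : ℕ) :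
    ∃ Cp Cm : Matrix (Fin (d + 1)) (Fin (d + 1)) ℂ,
      (∀ i j : Fin (d + 1), (i : ℕ) < (j : ℕ) → Cp i j = 0) ∧
      (∀ i : Fin (d + 1), Cp i i = 1) ∧
      (∀ i j : Fin (d + 1), (i : ℕ) < (j : ℕ) → Cm i j = 0) ∧
      (∀ i : Fin (d + 1), Cm i i = 1) ∧
      J1 d * Cp = Cm * D1 d ∧
      J2 d * Cm = Cp * D2 d := by
  have hlead (j : Fin (d + 1)) := leadingOneAt_lensColumns j.is_le
  exact ⟨cPlus d, cMinus d, fun i j h => (hlead j).1.1 i h, fun i => (hlead i).1.2 i rfl,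
    fun i j h => (hlead j).2.1 i h, fun i => (hlead i).2.2 i rfl, J1_mul_cPlus d, J2_mul_cMinus d⟩

/-- Existence of the lower-triangular unipotent matrices `C⁺`, `C⁻` used to open the
lenses in the intersection region of the steepest descent analysis. -/
theorem stmt9 (d : ℕ) (hd : 2 ≤ d) :
    ∃ Cp Cm : Matrix (Fin (d + 1)) (Fin (d + 1)) ℂ,
      (∀ i j : Fin (d + 1), (i : ℕ) < (j : ℕ) → Cp i j = 0) ∧
      (∀ i : Fin (d + 1), Cp i i = 1) ∧
      (∀ i j : Fin (d + 1), (i : ℕ) < (j : ℕ) → Cm i j = 0) ∧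
      (∀ i : Fin (d + 1), Cm i i = 1) ∧
      J1 d * Cp = Cm * D1 d ∧
      J2 d * Cm = Cp * D2 d :=
  stmt9_general d
end

section
/- Let d ≥ 2 be an integer and ω = e^{2πi/(d+1)}. Define the sequence L by L(1) = 1, L(2j) = ω^{−j}, L(2j+1) = ω^{j}, and the sequence L′ by L′(1) = 1, L′(2j) = ω^{j}, L′(2j+1) = ω^{−j}. For integers 0 ≤ k ≤ n let e_{k,n} and e′_{k,n} be the k-th elementary symmetric polynomial evaluated respectively at (L(1), …, L(n)) and (L′(1), …, L′(n)). Then for all 0 ≤ k ≤ n: (i) if n is odd then e_{k,n} = e′_{k,n} and e_{n−k,n} = e_{k,n}; (ii) if n is even then e_{k,n} = ω^{−n/2}·e′_{n−k,n} and e′_{k,n} = ω^{n/2}·e_{n−k,n}. -/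
/-- The sequence `L(1) = 1`, `L(2j) = ω^{-j}`, `L(2j+1) = ω^j` (1-based argument). -/
noncomputable def Lseq (d : ℕ) (m : ℕ) : ℂ :=
  if m % 2 = 0 then (omC d ^ (m / 2))⁻¹ else omC d ^ (m / 2)

/-- The sequence `L'(1) = 1`, `L'(2j) = ω^{j}`, `L'(2j+1) = ω^{-j}`. -/
noncomputable def Lseq' (d : ℕ) (m : ℕ) : ℂ :=
  if m % 2 = 0 then omC d ^ (m / 2) else (omC d ^ (m / 2))⁻¹

/-- `k`-th elementary symmetric polynomial evaluated at the first `n` terms of `f`. -/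
noncomputable def esymSeq (f : ℕ → ℂ) (n k : ℕ) : ℂ :=
  ∑ A ∈ Finset.powersetCard k (Finset.Icc 1 n), ∏ i ∈ A, f i

/-!
`L'` is the pointwise inverse of `L`, and passing to complements gives
`e_{n-k}(x) = (∏ xᵢ) · e_k(x⁻¹)` for nonzero `xᵢ`. For odd `n = 2m + 1` the lists `L` and `L'`
are the same multiset `{1, ω^{±1}, …, ω^{±m}}`, and `∏ L = 1`; for even `n = 2m`, `∏ L = ω^{-m}`.
-/

namespace Finset

variable {ι : Type*} [DecidableEq ι]

theorem sum_powersetCard_card_sub {M : Type*} [AddCommMonoid M] (s : Finset ι) {k : ℕ}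
    (hk : k ≤ #s) (g : Finset ι → M) :
    ∑ A ∈ s.powersetCard (#s - k), g A = ∑ A ∈ s.powersetCard k, g (s \ A) := by
  refine sum_nbij' (s \ ·) (s \ ·) (fun A hA => ?_) (fun A hA => ?_) (fun A hA => ?_)
    (fun A hA => ?_) (fun A hA => ?_) <;> simp only [mem_powersetCard] at hA ⊢
  · refine ⟨sdiff_subset, ?_⟩
    rw [card_sdiff_of_subset hA.1, hA.2]
    omega
  · exact ⟨sdiff_subset, by rw [card_sdiff_of_subset hA.1, hA.2]⟩
  · exact sdiff_sdiff_eq_self hA.1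
  · exact sdiff_sdiff_eq_self hA.1
  · rw [sdiff_sdiff_eq_self hA.1]

theorem prod_sdiff_eq_mul_prod_inv {K : Type*} [CommGroupWithZero K] {s A : Finset ι}
    (hA : A ⊆ s) {f : ι → K} (hf : ∀ i ∈ A, f i ≠ 0) :
    ∏ i ∈ s \ A, f i = (∏ i ∈ s, f i) * ∏ i ∈ A, (f i)⁻¹ := by
  rw [← prod_sdiff hA, prod_inv_distrib, mul_assoc, mul_inv_cancel₀ (prod_ne_zero_iff.2 hf),
    mul_one]

end Finset

theorem esymSeq_sub_eq_prod_mul_esymSeq_inv {f : ℕ → ℂ} {n k : ℕ} (hk : k ≤ n)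
    (hf : ∀ i ∈ Finset.Icc 1 n, f i ≠ 0) :
    esymSeq f n (n - k) = (∏ i ∈ Finset.Icc 1 n, f i) * esymSeq f⁻¹ n k := by
  have hcard : (Finset.Icc 1 n).card = n := Nat.card_Icc 1 n
  have hreindex := Finset.sum_powersetCard_card_sub (Finset.Icc 1 n) (hcard ▸ hk)
    fun A => ∏ i ∈ A, f i
  rw [hcard] at hreindex
  rw [esymSeq, hreindex, esymSeq, Finset.mul_sum]
  refine Finset.sum_congr rfl fun A hA => ?_
  have hAs := (Finset.mem_powersetCard.1 hA).1
  exact Finset.prod_sdiff_eq_mul_prod_inv hAs fun i hi => hf i (hAs hi)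

theorem omC_ne_zero (d : ℕ) : omC d ≠ 0 := Complex.exp_ne_zero _

theorem Lseq'_eq_inv (d : ℕ) : Lseq' d = (Lseq d)⁻¹ := by
  ext m
  simp only [Lseq, Lseq', Pi.inv_apply]
  split_ifs <;> simp

theorem Lseq_ne_zero (d m : ℕ) : Lseq d m ≠ 0 := by
  unfold Lseq
  split_ifs <;> simp [omC_ne_zero]

theorem Lseq_two_mul (d j : ℕ) : Lseq d (2 * j) = (omC d ^ j)⁻¹ := by
  simp [Lseq]

theorem Lseq_two_mul_add_one (d j : ℕ) : Lseq d (2 * j + 1) = omC d ^ j := by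
  simp [Lseq, Nat.add_mod, Nat.add_div]

theorem prod_Icc_Lseq_two_mul (d m : ℕ) :
    ∏ i ∈ Finset.Icc 1 (2 * m), Lseq d i = (omC d ^ m)⁻¹ := by
  induction m with
  | zero => simp
  | succ m ih =>
    rw [show 2 * (m + 1) = 2 * m + 1 + 1 by ring, Finset.prod_Icc_succ_top (by omega),
      Finset.prod_Icc_succ_top (by omega), ih, Lseq_two_mul_add_one,
      show 2 * m + 1 + 1 = 2 * (m + 1) by ring, Lseq_two_mul]
    field_simp [omC_ne_zero]

theorem prod_Icc_Lseq_two_mul_add_one (d m : ℕ) :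
    ∏ i ∈ Finset.Icc 1 (2 * m + 1), Lseq d i = 1 := by
  rw [Finset.prod_Icc_succ_top (by omega), prod_Icc_Lseq_two_mul, Lseq_two_mul_add_one,
    inv_mul_cancel₀ (pow_ne_zero _ (omC_ne_zero d))]

theorem map_Icc_two_mul_add_one_Lseq_eq_Lseq' (d m : ℕ) :
    (Finset.Icc 1 (2 * m + 1)).val.map (Lseq d) =
      (Finset.Icc 1 (2 * m + 1)).val.map (Lseq' d) := by
  induction m with
  | zero => simp [Lseq, Lseq']
  | succ m ih =>
    have hval : ∀ j, (Finset.Icc 1 (j + 1)).val = (j + 1) ::ₘ (Finset.Icc 1 j).val := fun j => by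
      rw [← Finset.insert_Icc_right_eq_Icc_add_one (by omega),
        Finset.insert_val_of_notMem (by simp)]
    have htwo : 2 * m + 1 + 1 = 2 * (m + 1) := by ring
    have hodd : Lseq d (2 * m + 1 + 1 + 1) = Lseq' d (2 * m + 1 + 1) := by
      rw [htwo, Lseq'_eq_inv, Pi.inv_apply, Lseq_two_mul_add_one, Lseq_two_mul, inv_inv]
    have heven : Lseq d (2 * m + 1 + 1) = Lseq' d (2 * m + 1 + 1 + 1) := by
      rw [htwo, Lseq'_eq_inv, Pi.inv_apply, Lseq_two_mul_add_one, Lseq_two_mul]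
    rw [show 2 * (m + 1) + 1 = 2 * m + 1 + 1 + 1 by ring, hval, hval, Multiset.map_cons,
      Multiset.map_cons, Multiset.map_cons, Multiset.map_cons, ih, hodd, heven, Multiset.cons_swap]

theorem esymSeq_two_mul_add_one_Lseq_eq_Lseq' (d m k : ℕ) :
    esymSeq (Lseq d) (2 * m + 1) k = esymSeq (Lseq' d) (2 * m + 1) k := by
  rw [esymSeq, esymSeq, ← Finset.esymm_map_val, ← Finset.esymm_map_val,
    map_Icc_two_mul_add_one_Lseq_eq_Lseq']

theorem stmt13_general (d : ℕ) (n k : ℕ) (hk : k ≤ n) :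
    (n % 2 = 1 →
      esymSeq (Lseq d) n k = esymSeq (Lseq' d) n k ∧
      esymSeq (Lseq d) n (n - k) = esymSeq (Lseq d) n k) ∧
    (n % 2 = 0 →
      esymSeq (Lseq d) n k = (omC d ^ (n / 2))⁻¹ * esymSeq (Lseq' d) n (n - k) ∧
      esymSeq (Lseq' d) n k = omC d ^ (n / 2) * esymSeq (Lseq d) n (n - k)) := by
  have hL : ∀ i ∈ Finset.Icc 1 n, Lseq d i ≠ 0 := fun i _ => Lseq_ne_zero d i
  have hL' : ∀ i ∈ Finset.Icc 1 n, Lseq' d i ≠ 0 := fun i _ => by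
    simp [Lseq'_eq_inv, Lseq_ne_zero]
  constructor
  · intro hn
    obtain ⟨m, rfl⟩ : ∃ m, n = 2 * m + 1 := ⟨n / 2, by omega⟩
    have hsame := esymSeq_two_mul_add_one_Lseq_eq_Lseq' d m k
    refine ⟨hsame, ?_⟩
    rw [esymSeq_sub_eq_prod_mul_esymSeq_inv hk hL, prod_Icc_Lseq_two_mul_add_one, one_mul,
      ← Lseq'_eq_inv, hsame]
  · intro hn
    obtain ⟨m, rfl⟩ : ∃ m, n = 2 * m := ⟨n / 2, by omega⟩
    have hkk : 2 * m - (2 * m - k) = k := by omega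
    have hprod := prod_Icc_Lseq_two_mul d m
    rw [Nat.mul_div_cancel_left m two_pos]
    constructor
    · simpa [hkk, hprod, Lseq'_eq_inv] using
        esymSeq_sub_eq_prod_mul_esymSeq_inv (Nat.sub_le _ k) hL
    · simpa [hkk, hprod, Lseq'_eq_inv, Finset.prod_inv_distrib] using
        esymSeq_sub_eq_prod_mul_esymSeq_inv (Nat.sub_le _ k) hL'

/-- Symmetric-function identities for `e_{k,n}` and `e'_{k,n}`:
(i) if `n` is odd then `e_{k,n} = e'_{k,n}` and `e_{n-k,n} = e_{k,n}`;
(ii) if `n` is even then `e_{k,n} = ω^{-n/2}·e'_{n-k,n}` and `e'_{k,n} = ω^{n/2}·e_{n-k,n}`. -/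
theorem stmt13 (d : ℕ) (hd : 2 ≤ d) (n k : ℕ) (hk : k ≤ n) :
    (n % 2 = 1 →
      esymSeq (Lseq d) n k = esymSeq (Lseq' d) n k ∧
      esymSeq (Lseq d) n (n - k) = esymSeq (Lseq d) n k) ∧
    (n % 2 = 0 →
      esymSeq (Lseq d) n k = (omC d ^ (n / 2))⁻¹ * esymSeq (Lseq' d) n (n - k) ∧
      esymSeq (Lseq' d) n k = omC d ^ (n / 2) * esymSeq (Lseq d) n (n - k)) :=
  stmt13_general d n k hk
end
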